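/- arXiv:2508.04997 — 4 statements merged into one kernel-verified Lean document; each statement's English description precedes it below -/
import Mathlib

section
/- Let N ≥ 1 be an integer, α ∈ ℝ and β ≥ 0. Define b : ℝ^N → ℝ^N by b_i(x) = α x_i − x_i³ − β(x_i − x̄), where x̄ = (1/N)∑_{j=1}^N x_j. Then for all x, z ∈ ℝ^N: ⟨x − z, b(x) − b(z)⟩ ≤ α|x − z|² − (1/(4N))|x − z|⁴, where |·| is the Euclidean norm and ⟨·,·⟩ the Euclidean inner product. -/
/-!
Expanding the drift, the inner product splits into three pieces. The linear part gives
`α|x − z|²`. The mean-field coupling contributes `−β ∑ dᵢ (dᵢ − d̄)` with `d = x − z`, and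
`∑ dᵢ (dᵢ − d̄) = ∑ dᵢ² − (∑ dᵢ)²/N ≥ 0` by Cauchy–Schwarz, so it can only help since `β ≥ 0`.
The cubic part is bounded termwise by `(x − z)(x³ − z³) = (x − z)²(x² + xz + z²) ≥ (x − z)⁴/4`,
and the power-mean inequality `∑ dᵢ⁴ ≥ (∑ dᵢ²)²/N` turns this into the quartic term.
-/

open Finset

section CardMean

variable {ι α : Type*} [Field α] [LinearOrder α] [IsStrictOrderedRing α]

theorem sq_sum_div_card_le_sum_sq (s : Finset ι) (f : ι → α) :
    (∑ i ∈ s, f i) ^ 2 / #s ≤ ∑ i ∈ s, f i ^ 2 := by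
  obtain rfl | hs := s.eq_empty_or_nonempty
  · simp
  rw [div_le_iff₀' (by positivity)]
  exact sq_sum_le_card_mul_sum_sq

theorem sum_mul_sub_mean_nonneg (s : Finset ι) (f : ι → α) :
    0 ≤ ∑ i ∈ s, f i * (f i - (∑ j ∈ s, f j) / #s) := by
  have h : ∑ i ∈ s, f i * (f i - (∑ j ∈ s, f j) / #s)
      = ∑ i ∈ s, f i ^ 2 - (∑ i ∈ s, f i) ^ 2 / #s := by
    simp only [mul_sub, sum_sub_distrib, ← sum_mul, sq, mul_div_assoc]
  rw [h, sub_nonneg]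
  exact sq_sum_div_card_le_sum_sq s f

end CardMean

theorem sub_pow_four_div_four_le_sub_mul_sub_pow_three (x z : ℝ) :
    (x - z) ^ 4 / 4 ≤ (x - z) * (x ^ 3 - z ^ 3) := by
  -- `(x - z)(x³ - z³) - (x - z)⁴/4 = 3/4 · (x - z)²(x + z)²`
  nlinarith [mul_nonneg (sq_nonneg (x - z)) (sq_nonneg (x + z))]

theorem meanfield_drift_dissipative_general (N : ℕ) (α β : ℝ) (hβ : 0 ≤ β)
    (b : (Fin N → ℝ) → Fin N → ℝ)
    (hb : ∀ (x : Fin N → ℝ) (i : Fin N),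
      b x i = α * x i - (x i) ^ 3 - β * (x i - (∑ j, x j) / N)) :
    ∀ x z : Fin N → ℝ,
      (∑ i, (x i - z i) * (b x i - b z i))
        ≤ α * (∑ i, (x i - z i) ^ 2) - (1 / (4 * N)) * (∑ i, (x i - z i) ^ 2) ^ 2 := by
  intro x z
  set d : Fin N → ℝ := fun i => x i - z i
  have hsplit : ∑ i, (x i - z i) * (b x i - b z i) = α * ∑ i, d i ^ 2
      - ∑ i, d i * (x i ^ 3 - z i ^ 3) - β * ∑ i, d i * (d i - (∑ j, d j) / N) := by
    simp only [hb, mul_sum, ← sum_sub_distrib]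
    exact sum_congr rfl fun i _ => by simp only [d, sum_sub_distrib]; ring
  have hcubic : (∑ i, d i ^ 4) / 4 ≤ ∑ i, d i * (x i ^ 3 - z i ^ 3) := by
    rw [sum_div]
    exact sum_le_sum fun i _ => sub_pow_four_div_four_le_sub_mul_sub_pow_three (x i) (z i)
  have hpower : (∑ i, d i ^ 2) ^ 2 / N ≤ ∑ i, d i ^ 4 := by
    have h := sq_sum_div_card_le_sum_sq univ fun i => d i ^ 2
    rw [card_univ, Fintype.card_fin] at h
    exact h.trans_eq (sum_congr rfl fun i _ => by ring)
  have hcoupling : 0 ≤ ∑ i, d i * (d i - (∑ j, d j) / N) := by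
    simpa using sum_mul_sub_mean_nonneg univ d
  have hquartic : 1 / (4 * N) * (∑ i, d i ^ 2) ^ 2 = (∑ i, d i ^ 2) ^ 2 / N / 4 := by ring
  rw [hsplit]
  linarith [mul_nonneg hβ hcoupling]

/-- Dissipativity of the mean-field drift `b_i(x) = α x_i − x_i³ − β(x_i − x̄)`:
`⟨x − z, b(x) − b(z)⟩ ≤ α|x − z|² − (1/(4N))|x − z|⁴`. -/
theorem meanfield_drift_dissipative (N : ℕ) (hN : 1 ≤ N) (α β : ℝ) (hβ : 0 ≤ β)
    (b : (Fin N → ℝ) → Fin N → ℝ)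
    (hb : ∀ (x : Fin N → ℝ) (i : Fin N),
      b x i = α * x i - (x i) ^ 3 - β * (x i - (∑ j, x j) / N)) :
    ∀ x z : Fin N → ℝ,
      (∑ i, (x i - z i) * (b x i - b z i))
        ≤ α * (∑ i, (x i - z i) ^ 2) - (1 / (4 * N)) * (∑ i, (x i - z i) ^ 2) ^ 2 :=
  meanfield_drift_dissipative_general N α β hβ b hb
end

section
/- Let N ≥ 1 be an integer and C ≥ 0, ᾱ ≥ 0, β ≥ 0 real constants. Then there exists a constant K > 0 such that for every x ∈ ℝ^N and every α ∈ [0, ᾱ]: C(1 + |x|²) + 2∑_{i=1}^N x_i (α x_i − x_i³ − β(x_i − x̄)) ≤ −(1 + |x|²) + K, where x̄ = (1/N)∑_{j=1}^N x_j and |·| is the Euclidean norm. -/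
open Finset

/-!
The mean-field coupling is dissipative: `∑ xᵢ (xᵢ - x̄) = ∑ (xᵢ - x̄)² ≥ 0`, so it can be dropped.
What remains splits over coordinates, and in each coordinate the quartic `-2xᵢ⁴` beats any
quadratic growth `a xᵢ²`, since `a t² - 2t⁴ ≤ a²/8`. Hence `K = C + 1 + N (C + 1 + 2ᾱ)² / 8` works.
-/

theorem mul_sq_sub_two_mul_pow_four_le (a t : ℝ) : a * t ^ 2 - 2 * t ^ 4 ≤ a ^ 2 / 8 := by
  nlinarith [sq_nonneg (4 * t ^ 2 - a)]

theorem Finset.sum_mul_sub_average_nonneg {ι : Type*} (s : Finset ι) (x : ι → ℝ) :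
    0 ≤ ∑ i ∈ s, x i * (x i - (∑ j ∈ s, x j) / #s) := by
  have hexpand : ∑ i ∈ s, x i * (x i - (∑ j ∈ s, x j) / #s)
      = ∑ i ∈ s, x i ^ 2 - (∑ j ∈ s, x j) ^ 2 / #s := by
    simp only [mul_sub, sum_sub_distrib, ← sum_mul, sq, mul_div_assoc]
  rw [hexpand, sub_nonneg]
  exact div_le_of_le_mul₀ (by positivity) (sum_nonneg fun i _ => sq_nonneg (x i))
    (by simpa only [mul_comm] using sq_sum_le_card_mul_sum_sq)

theorem meanfield_lyapunov_drift_general (N : ℕ) (C αbar β : ℝ)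
    (hC : 0 ≤ C) (hβ : 0 ≤ β) :
    ∃ K : ℝ, 0 < K ∧ ∀ (x : Fin N → ℝ) (α : ℝ), 0 ≤ α → α ≤ αbar →
      C * (1 + ∑ i, (x i) ^ 2)
        + 2 * ∑ i, x i * (α * x i - (x i) ^ 3 - β * (x i - (∑ j, x j) / N))
      ≤ -(1 + ∑ i, (x i) ^ 2) + K := by
  set a := C + 1 + 2 * αbar
  refine ⟨C + 1 + N * (a ^ 2 / 8), by positivity, fun x α hα hαbar => ?_⟩
  set m := (∑ j, x j) / N
  have hcoupling : 0 ≤ ∑ i, x i * (x i - m) := by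
    simpa using sum_mul_sub_average_nonneg univ x
  have hcoord : ∀ i, (C + 1) * x i ^ 2 + 2 * (x i * (α * x i - x i ^ 3 - β * (x i - m)))
      ≤ a ^ 2 / 8 - 2 * β * (x i * (x i - m)) := fun i => by
    have hα_x : α * x i ^ 2 ≤ αbar * x i ^ 2 := by gcongr
    linarith [mul_sq_sub_two_mul_pow_four_le a (x i)]
  have hsum := sum_le_sum fun i (_ : i ∈ univ) => hcoord i
  simp only [sum_add_distrib, sum_sub_distrib, ← mul_sum, sum_const, card_univ,
    Fintype.card_fin, nsmul_eq_mul] at hsum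
  linarith [mul_nonneg hβ hcoupling]

/-- Lyapunov drift condition for the mean-field model: there is `K > 0` such that
`C(1 + |x|²) + 2∑ᵢ xᵢ(α xᵢ − xᵢ³ − β(xᵢ − x̄)) ≤ −(1 + |x|²) + K`
for all `x ∈ ℝ^N` and all `α ∈ [0, ᾱ]`. -/
theorem meanfield_lyapunov_drift (N : ℕ) (hN : 1 ≤ N) (C αbar β : ℝ)
    (hC : 0 ≤ C) (hαbar : 0 ≤ αbar) (hβ : 0 ≤ β) :
    ∃ K : ℝ, 0 < K ∧ ∀ (x : Fin N → ℝ) (α : ℝ), 0 ≤ α → α ≤ αbar →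
      C * (1 + ∑ i, (x i) ^ 2)
        + 2 * ∑ i, x i * (α * x i - (x i) ^ 3 - β * (x i - (∑ j, x j) / N))
      ≤ -(1 + ∑ i, (x i) ^ 2) + K :=
  meanfield_lyapunov_drift_general N C αbar β hC hβ
end

section
/- Let a ∈ ℝ and b > 0, and set A(v) = a v² − b v⁴ for v ≥ 0 and f(s) = e^{−A(s)} ∫_s^∞ e^{A(v)} dv for s ≥ 0. Then: (i) for every s ≥ 0 the integral ∫_s^∞ e^{A(v)} dv is finite, so f is well-defined and nonnegative; and (ii) ∫_0^∞ f(s) ds < ∞, i.e., the function G(ρ) = ∫_0^ρ f(s) ds is bounded on [0, ∞). -/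
/-!
`e^{A}` is dominated by a Gaussian, so all its tails are integrable, and the Mills ratio
`f(s) = e^{-A(s)} ∫_s^∞ e^{A}` is bounded on compact sets by `e^{-A(s)} ∫_0^∞ e^{A}`.
Once `a ≤ b s²`, writing `A(v) - A(s) = (v² - s²)(a - b(v² + s²))` shows that `A` decays to the
right of `s` at least at the linear rate `2 b s³`, so `f(s) ≤ 1 / (2 b s³)`, which is integrable at
infinity.
-/

open MeasureTheory Set Real

/-- For `φ(v) = a v² - b v⁴` this is the function `f` of the statement. -/
noncomputable def millsRatio (φ : ℝ → ℝ) (s : ℝ) : ℝ :=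
  exp (-φ s) * ∫ v in Ici s, exp (φ v)

lemma millsRatio_nonneg (φ : ℝ → ℝ) (s : ℝ) : 0 ≤ millsRatio φ s :=
  mul_nonneg (exp_pos _).le (setIntegral_nonneg measurableSet_Ici fun _ _ => (exp_pos _).le)

lemma antitone_setIntegral_Ici {g : ℝ → ℝ} (hg₀ : 0 ≤ g) (hg : Integrable g) :
    Antitone fun s => ∫ v in Ici s, g v :=
  fun _ _ hst => setIntegral_mono_set hg.integrableOn (ae_of_all _ hg₀)
    (Ici_subset_Ici.2 hst).eventuallyLE

lemma measurable_millsRatio {φ : ℝ → ℝ} (hφ : Continuous φ)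
    (hint : Integrable fun v => exp (φ v)) :
    Measurable (millsRatio φ) :=
  (continuous_exp.comp hφ.neg).measurable.mul
    (antitone_setIntegral_Ici (fun _ => (exp_pos _).le) hint).measurable

lemma integrableOn_Icc_millsRatio {φ : ℝ → ℝ} (hφ : Continuous φ)
    (hint : Integrable fun v => exp (φ v)) (s t : ℝ) :
    IntegrableOn (millsRatio φ) (Icc s t) := by
  have hbound : IntegrableOn (fun x => exp (-φ x) * ∫ v in Ici s, exp (φ v)) (Icc s t) :=
    ((continuous_exp.comp hφ.neg).mul continuous_const).integrableOn_Icc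
  refine hbound.mono' (measurable_millsRatio hφ hint).aestronglyMeasurable.restrict
    ((ae_restrict_iff' measurableSet_Icc).2 (ae_of_all _ fun x hx => ?_))
  rw [norm_of_nonneg (millsRatio_nonneg φ x)]
  exact mul_le_mul_of_nonneg_left
    (antitone_setIntegral_Ici (fun _ => (exp_pos _).le) hint hx.1) (exp_pos _).le

lemma millsRatio_le_inv {φ : ℝ → ℝ} {s c : ℝ} (hc : 0 < c)
    (hφ : ∀ v ∈ Ici s, φ v ≤ φ s - c * (v - s)) :
    millsRatio φ s ≤ c⁻¹ := by
  have hdom : IntegrableOn (fun v => exp (φ s + c * s) * exp (-c * v)) (Ici s) :=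
    (integrableOn_Ici_iff_integrableOn_Ioi).2
      ((integrableOn_exp_mul_Ioi (by linarith) s).const_mul _)
  have hle : ∫ v in Ici s, exp (φ v) ≤ ∫ v in Ici s, exp (φ s + c * s) * exp (-c * v) := by
    refine integral_mono_of_nonneg (ae_of_all _ fun _ => (exp_pos _).le) hdom
      ((ae_restrict_iff' measurableSet_Ici).2 (ae_of_all _ fun v hv => ?_))
    show exp (φ v) ≤ exp (φ s + c * s) * exp (-c * v)
    rw [← exp_add, exp_le_exp]
    linarith [hφ v hv]
  have hdom_eq : ∫ v in Ici s, exp (φ s + c * s) * exp (-c * v) = exp (φ s) * c⁻¹ := by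
    rw [integral_Ici_eq_integral_Ioi, integral_const_mul, integral_exp_mul_Ioi (by linarith),
      div_neg, neg_div, neg_neg, div_eq_mul_inv, ← mul_assoc, ← exp_add]
    ring_nf
  calc millsRatio φ s ≤ exp (-φ s) * (exp (φ s) * c⁻¹) :=
        mul_le_mul_of_nonneg_left (hle.trans hdom_eq.le) (exp_pos _).le
    _ = c⁻¹ := by rw [← mul_assoc, ← exp_add, neg_add_cancel, exp_zero, one_mul]

section Quartic

variable {a b : ℝ}

lemma integrable_exp_quartic (hb : 0 < b) :
    Integrable fun v : ℝ => exp (a * v ^ 2 - b * v ^ 4) := by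
  refine ((integrable_exp_neg_mul_sq one_pos).const_mul (exp ((a + 1) ^ 2 / (4 * b)))).mono'
    (by fun_prop) (ae_of_all _ fun v => ?_)
  rw [norm_of_nonneg (exp_pos _).le, ← exp_add, exp_le_exp]
  -- the constant comes from completing the square in `v²`
  have hsq : (a + 1) ^ 2 / (4 * b) + -1 * v ^ 2 - (a * v ^ 2 - b * v ^ 4)
      = (a + 1 - 2 * b * v ^ 2) ^ 2 / (4 * b) := by
    field_simp
    ring
  have hb4 : (0 : ℝ) ≤ 4 * b := by positivity
  nlinarith [hsq, div_nonneg (sq_nonneg (a + 1 - 2 * b * v ^ 2)) hb4]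

lemma quartic_le_linear (hb : 0 ≤ b) {s v : ℝ} (hs : 0 ≤ s) (ha : a ≤ b * s ^ 2)
    (hsv : s ≤ v) :
    a * v ^ 2 - b * v ^ 4 ≤ a * s ^ 2 - b * s ^ 4 - 2 * b * s ^ 3 * (v - s) := by
  have hfactor : a * v ^ 2 - b * v ^ 4 - (a * s ^ 2 - b * s ^ 4)
      = (v - s) * (v + s) * (a - b * (v ^ 2 + s ^ 2)) := by ring
  have hsq : b * s ^ 2 ≤ b * v ^ 2 := by gcongr
  have hneg : a - b * (v ^ 2 + s ^ 2) ≤ -(b * s ^ 2) := by linarith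
  have hvs : 0 ≤ v - s := sub_nonneg.2 hsv
  have hsum : 2 * s ≤ v + s := by linarith
  nlinarith [mul_le_mul_of_nonneg_left hneg (mul_nonneg hvs (by linarith : 0 ≤ v + s)),
    mul_le_mul_of_nonneg_left hsum (mul_nonneg hvs (mul_nonneg hb (sq_nonneg s)))]

lemma integrableOn_Ici_millsRatio_quartic (hb : 0 < b) {s₀ : ℝ} (hs₀ : 0 < s₀)
    (ha : a ≤ b * s₀ ^ 2) :
    IntegrableOn (millsRatio fun v => a * v ^ 2 - b * v ^ 4) (Ici s₀) := by
  have hdom : IntegrableOn (fun s : ℝ => (2 * b)⁻¹ * s ^ (-3 : ℝ)) (Ici s₀) :=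
    (integrableOn_Ici_iff_integrableOn_Ioi).2
      ((integrableOn_Ioi_rpow_of_lt (by norm_num) hs₀).const_mul _)
  refine hdom.mono' ((measurable_millsRatio (by fun_prop)
      (integrable_exp_quartic hb)).aestronglyMeasurable.restrict)
    ((ae_restrict_iff' measurableSet_Ici).2 (ae_of_all _ fun s hs => ?_))
  have hs : s₀ ≤ s := hs
  have hspos : 0 < s := hs₀.trans_le hs
  have has : a ≤ b * s ^ 2 := ha.trans (by gcongr)
  rw [norm_of_nonneg (millsRatio_nonneg _ s), rpow_neg hspos.le, rpow_ofNat, ← mul_inv]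
  exact millsRatio_le_inv (by positivity) fun v hv => quartic_le_linear hb.le hspos.le has hv

end Quartic

/-- With `A(v) = a v² − b v⁴` (`b > 0`) and
`f(s) = e^{−A(s)} ∫_s^∞ e^{A(v)} dv`:
(i) the integral `∫_s^∞ e^{A(v)} dv` is finite for every `s ≥ 0`, and `f` is
nonnegative; (ii) `∫_0^∞ f(s) ds < ∞`, i.e. `G(ρ) = ∫_0^ρ f` is bounded. -/
theorem comparison_function_bounded (a b : ℝ) (hb : 0 < b) :
    (∀ s : ℝ, 0 ≤ s →
      IntegrableOn (fun v : ℝ => Real.exp (a * v ^ 2 - b * v ^ 4)) (Set.Ici s)) ∧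
    (∀ s : ℝ, 0 ≤ s →
      0 ≤ Real.exp (-(a * s ^ 2 - b * s ^ 4))
            * ∫ v in Set.Ici s, Real.exp (a * v ^ 2 - b * v ^ 4)) ∧
    IntegrableOn
      (fun s : ℝ => Real.exp (-(a * s ^ 2 - b * s ^ 4))
            * ∫ v in Set.Ici s, Real.exp (a * v ^ 2 - b * v ^ 4))
      (Set.Ici 0) := by
  have hint := integrable_exp_quartic (a := a) hb
  refine ⟨fun _ _ => hint.integrableOn,
    fun s _ => millsRatio_nonneg (fun v => a * v ^ 2 - b * v ^ 4) s, ?_⟩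
  obtain ⟨s₀, hs₀, ha⟩ := ((Filter.eventually_gt_atTop 0).and
    (((Filter.tendsto_pow_atTop two_ne_zero).const_mul_atTop hb).eventually_ge_atTop a)).exists
  rw [← Icc_union_Ici_eq_Ici hs₀.le]
  exact (integrableOn_Icc_millsRatio (by fun_prop) hint 0 s₀).union
    (integrableOn_Ici_millsRatio_quartic hb hs₀ ha)
end

section
/- Let a ∈ ℝ and b > 0, and set A(v) = a v² − b v⁴ for v ≥ 0 and f(s) = e^{−A(s)} ∫_s^∞ e^{A(v)} dv for s ≥ 0. Then lim_{s→∞} s³ f(s) = 1/(4b). -/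
/-!
Write `F(s) = ∫ₛ^∞ e^{A}` and `w(s) = s⁻³`, so that `s³ f(s) = F(s) / (e^{A(s)} w(s))`. Since
`A(v) ≤ -v` for large `v`, `e^{A}` is integrable and both `F` and `e^{A} w` tend to `0`, so by
L'Hôpital's rule the limit is that of `-e^{A} / (e^{A} w)' = -1 / (A' w + w')
= -1 / (2a/s² - 4b - 3/s⁴)`, namely `1/(4b)`.
-/

open Real Set Filter Topology MeasureTheory

theorem hasDerivAt_integral_Ici {E : Type*} [NormedAddCommGroup E] [NormedSpace ℝ E]
    [CompleteSpace E] {f : ℝ → E} (hf : Continuous f) (hfi : ∀ t, IntegrableOn f (Ici t))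
    (s : ℝ) : HasDerivAt (fun t => ∫ x in Ici t, f x) (-f s) s := by
  have htail : (fun t => ∫ x in Ici t, f x) = fun t => (∫ x in Ici 0, f x) - ∫ x in 0..t, f x := by
    ext t
    rw [← intervalIntegral.integral_Ici_sub_Ici' (hfi 0) (hfi t), sub_sub_cancel]
  rw [htail]
  exact (hf.integral_hasStrictDerivAt 0 s).hasDerivAt.const_sub _

theorem tendsto_integral_Ici_exp_div {A A' w w' : ℝ → ℝ} {L : ℝ}
    (hA : ∀ s, HasDerivAt A (A' s) s) (hint : ∀ t, IntegrableOn (fun v => exp (A v)) (Ici t))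
    (hw : ∀ᶠ s in atTop, HasDerivAt w (w' s) s)
    (hwA : Tendsto (fun s => exp (A s) * w s) atTop (𝓝 0))
    (hne : ∀ᶠ s in atTop, A' s * w s + w' s ≠ 0)
    (hlim : Tendsto (fun s => -(A' s * w s + w' s)⁻¹) atTop (𝓝 L)) :
    Tendsto (fun s => (∫ v in Ici s, exp (A v)) / (exp (A s) * w s)) atTop (𝓝 L) := by
  have hcont : Continuous fun v => exp (A v) :=
    continuous_exp.comp (continuous_iff_continuousAt.2 fun s => (hA s).continuousAt)
  refine HasDerivAt.lhopital_zero_atTop (f' := fun s => -exp (A s))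
    (g' := fun s => exp (A s) * (A' s * w s + w' s))
    (Eventually.of_forall (hasDerivAt_integral_Ici hcont hint)) ?_ ?_
    (tendsto_integral_Ici_zero tendsto_id) hwA (hlim.congr fun s => ?_)
  · filter_upwards [hw] with s hs
    exact ((hA s).exp.mul hs).congr_deriv (by ring)
  · filter_upwards [hne] with s hs
    exact mul_ne_zero (exp_pos _).ne' hs
  · rw [neg_div, div_mul_cancel_left₀ (exp_pos _).ne']

theorem tendsto_mul_sq_sub_mul_pow_four_atBot (a : ℝ) {b : ℝ} (hb : 0 < b) :
    Tendsto (fun v : ℝ => a * v ^ 2 - b * v ^ 4) atTop atBot := by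
  have hsq : Tendsto (fun v : ℝ => v ^ 2) atTop atTop := tendsto_pow_atTop two_ne_zero
  have hfac : Tendsto (fun v : ℝ => a - b * v ^ 2) atTop atBot :=
    tendsto_atBot_add_const_left _ a (tendsto_neg_atTop_atBot.comp (hsq.const_mul_atTop hb))
  exact (hsq.atTop_mul_atBot₀ hfac).congr fun v => by ring

theorem integrableOn_exp_mul_sq_sub_mul_pow_four (a : ℝ) {b : ℝ} (hb : 0 < b) (t : ℝ) :
    IntegrableOn (fun v : ℝ => exp (a * v ^ 2 - b * v ^ 4)) (Ici t) := by
  refine (integrableOn_Ici_iff_integrableOn_Ioi (by finiteness)).2 <|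
    integrable_of_isBigO_exp_neg one_pos (by fun_prop) (Asymptotics.IsBigO.of_bound 1 ?_)
  -- for `v ≥ 1`, `a v² - b v⁴ ≤ -v` as soon as `(a + 1) v² - b v⁴ ≤ 0`
  filter_upwards [(tendsto_mul_sq_sub_mul_pow_four_atBot (a + 1) hb).eventually_le_atBot 0,
    eventually_ge_atTop 1] with v hv hv1
  simp only [norm_eq_abs, abs_exp, one_mul, exp_le_exp]
  nlinarith

theorem tendsto_deriv_mul_sq_sub_mul_pow_four_div_pow_three (a b : ℝ) :
    Tendsto (fun s : ℝ => (2 * a * s - 4 * b * s ^ 3) * (s ^ 3)⁻¹ + -(3 * (s ^ 4)⁻¹)) atTop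
      (𝓝 (-(4 * b))) := by
  have hinv : ∀ n ≠ 0, Tendsto (fun s : ℝ => (s ^ n)⁻¹) atTop (𝓝 0) := fun n hn =>
    (tendsto_pow_atTop hn).inv_tendsto_atTop
  have hlim := ((hinv 2 two_ne_zero).const_mul (2 * a)).sub_const (4 * b) |>.add
    ((hinv 4 four_ne_zero).const_mul 3).neg
  simp only [mul_zero, zero_sub, neg_zero, add_zero] at hlim
  refine hlim.congr' ?_
  filter_upwards [eventually_ne_atTop 0] with s hs
  field_simp

/-- With `A(v) = a v² − b v⁴` (`b > 0`) and `f(s) = e^{−A(s)} ∫_s^∞ e^{A(v)} dv`,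
one has `lim_{s→∞} s³ f(s) = 1/(4b)`. -/
theorem comparison_function_asymptotics (a b : ℝ) (hb : 0 < b) :
    Filter.Tendsto
      (fun s : ℝ => s ^ 3 * (Real.exp (-(a * s ^ 2 - b * s ^ 4))
        * ∫ v in Set.Ici s, Real.exp (a * v ^ 2 - b * v ^ 4)))
      Filter.atTop (nhds (1 / (4 * b))) := by
  have hA (s : ℝ) : HasDerivAt (fun v => a * v ^ 2 - b * v ^ 4) (2 * a * s - 4 * b * s ^ 3) s :=
    (((hasDerivAt_pow 2 s).const_mul a).sub ((hasDerivAt_pow 4 s).const_mul b)).congr_deriv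
      (by ring)
  have hw : ∀ᶠ s in atTop, HasDerivAt (fun v : ℝ => (v ^ 3)⁻¹) (-(3 * (s ^ 4)⁻¹)) s := by
    filter_upwards [eventually_ne_atTop 0] with s hs
    exact ((hasDerivAt_pow 3 s).inv (pow_ne_zero 3 hs)).congr_deriv (by field_simp; ring)
  have hwA : Tendsto (fun s : ℝ => exp (a * s ^ 2 - b * s ^ 4) * (s ^ 3)⁻¹) atTop (𝓝 0) := by
    have hprod := (tendsto_exp_atBot.comp (tendsto_mul_sq_sub_mul_pow_four_atBot a hb)).mul
      (tendsto_pow_atTop three_ne_zero).inv_tendsto_atTop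
    rwa [mul_zero] at hprod
  have hden := tendsto_deriv_mul_sq_sub_mul_pow_four_div_pow_three a b
  have hlim := hden.inv₀ (by linarith) |>.neg
  rw [inv_neg, neg_neg, ← one_div] at hlim
  refine (tendsto_integral_Ici_exp_div hA (integrableOn_exp_mul_sq_sub_mul_pow_four a hb) hw hwA
    (hden.eventually_ne (by linarith)) hlim).congr fun s => ?_
  rw [exp_neg, div_eq_mul_inv, mul_inv, inv_inv]
  ring
end
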